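/- Let α, β be elements of the Laurent polynomial ring ℤ[A, A⁻¹], and define ⟨K⟩ = -A⁻³·α - A³·β and ⟨K_s⟩ = -A³·α - A⁻³·β. Then ⟨K⟩ = A⁻⁶·⟨K_s⟩ if and only if β = 0. -/

import Mathlib

open LaurentPolynomial

/-! The α-terms of ⟨K⟩ - A⁻⁶⟨K_s⟩ cancel, since A⁻⁶ · A³ = A⁻³, leaving -(A³ - A⁻⁹) β.
As A³ ≠ A⁻⁹ and ℤ[A, A⁻¹] is a domain, this vanishes exactly when β = 0. -/

namespace LaurentPolynomial

theorem T_injective {R : Type*} [Semiring R] [Nontrivial R] :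
    Function.Injective (T : ℤ → R[T;T⁻¹]) :=
  fun m n h => by simpa using congr_arg (fun p : R[T;T⁻¹] => p.coeff n) h

theorem T_sub_T_ne_zero {R : Type*} [Ring R] [Nontrivial R] {m n : ℤ} (h : m ≠ n) :
    (T m - T n : R[T;T⁻¹]) ≠ 0 :=
  sub_ne_zero.mpr (T_injective.ne h)

end LaurentPolynomial

theorem bracket_sub_T_neg_six_mul_switch {R : Type*} [CommRing R] (α β : R[T;T⁻¹]) :
    (-T (-3) * α - T 3 * β) - T (-6) * (-T 3 * α - T (-3) * β) = -((T 3 - T (-9)) * β) := by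
  have h₁ : (T (-6) * T 3 : R[T;T⁻¹]) = T (-3) := by rw [← T_add]; norm_num
  have h₂ : (T (-6) * T (-3) : R[T;T⁻¹]) = T (-9) := by rw [← T_add]; norm_num
  linear_combination α * h₁ + β * h₂

theorem bracket_neg_iff_beta_zero (α β K Ks : LaurentPolynomial ℤ)
    (hK : K = -T (-3) * α - T 3 * β)
    (hKs : Ks = -T 3 * α - T (-3) * β) :
    K = T (-6) * Ks ↔ β = 0 := by
  subst hK hKs
  rw [← sub_eq_zero, bracket_sub_T_neg_six_mul_switch, neg_eq_zero, mul_eq_zero,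
    or_iff_right (T_sub_T_ne_zero (by norm_num))]
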